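/- Let k ≥ 2 and n ≥ 1, and let B = (A_L, A_R, ψ) be a bimachine over Σ_k representing the partial function f_n^{(k)}. Suppose α₁, α₂ ∈ (Σ'_k)* both have length ≥ n, their n-th characters counted from the end are distinct letters of Σ'_k, and δ_L*(s_L, α₁) = δ_L*(s_L, α₂) = p_L. Then for every word γ = c₁c₂⋯c_m ∈ (Σ''_k)* with m ≥ n and every 0 ≤ l < m, the output ψ(δ_L*(p_L, c₁⋯c_l), c_{l+1}, r_l) equals the empty word ε, where r_l is the state of A_R reached from s_R by reading the reversal of the suffix c_{l+2}⋯c_m. -/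

import Mathlib

/-- The full alphabet `Σ_k = {1, …, 2k}` (letters are natural numbers). -/
def SigmaFull (k : ℕ) : Set ℕ := {a | 1 ≤ a ∧ a ≤ 2 * k}

/-- The lower half alphabet `Σ'_k = {1, …, k}`. -/
def SigmaLo (k : ℕ) : Set ℕ := {a | 1 ≤ a ∧ a ≤ k}

/-- The upper half alphabet `Σ''_k = {k+1, …, 2k}`. -/
def SigmaHi (k : ℕ) : Set ℕ := {a | k + 1 ≤ a ∧ a ≤ 2 * k}

/-- Words over a subalphabet `S`. -/
def Words (S : Set ℕ) : Set (List ℕ) := {w | ∀ a ∈ w, a ∈ S}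

/-- The language `L^{(i,j)}_n = (Σ'_k)* · i · (Σ'_k)^{n-1} · (Σ''_k)^{n-1} · j · (Σ''_k)*`. -/
def Lang (k n i j : ℕ) : Set (List ℕ) :=
  {w | ∃ u x y v : List ℕ, u ∈ Words (SigmaLo k) ∧ x ∈ Words (SigmaLo k) ∧
    x.length = n - 1 ∧ y ∈ Words (SigmaHi k) ∧ y.length = n - 1 ∧
    v ∈ Words (SigmaHi k) ∧ w = u ++ [i] ++ x ++ y ++ [j] ++ v}

/-- The graph of the partial function `f_n^{(k)}`: it maps `α` to the two-letter
word `ji` whenever `α ∈ L^{(i,j)}_n` for some `1 ≤ i ≤ k` and `k+1 ≤ j ≤ 2k`. -/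
def fGraph (k n : ℕ) (α ω : List ℕ) : Prop :=
  ∃ i j : ℕ, 1 ≤ i ∧ i ≤ k ∧ k + 1 ≤ j ∧ j ≤ 2 * k ∧ α ∈ Lang k n i j ∧ ω = [j, i]

/-- The domain of the partial function `f_n^{(k)}`. -/
def fDom (k n : ℕ) (α : List ℕ) : Prop := ∃ ω, fGraph k n α ω

/-- A bimachine over the alphabet of natural numbers, with word output:
two deterministic automata (all states final) and an output function `ψ`. -/
structure Bimachine (QL QR : Type) where
  sL : QL
  δL : QL → ℕ → QL
  sR : QR
  δR : QR → ℕ → QR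
  ψ : QL → ℕ → QR → Option (List ℕ)

/-- The extended transition function `δ*` of a deterministic automaton. -/
def dstar {Q : Type} (δ : Q → ℕ → Q) (q : Q) (w : List ℕ) : Q := w.foldl δ q

/-- Auxiliary form of the generalized output function, by recursion on the
reversed input word: `ψ*(l, ε, r) = ε` and
`ψ*(l, tσ, r) = ψ*(l, t, δ_R(r, σ)) · ψ(δ_L*(l, t), σ, r)`. -/
def psiStarRev {QL QR : Type} (B : Bimachine QL QR) (l : QL) :
    List ℕ → QR → Option (List ℕ)
  | [], _ => some []
  | σ :: s, r => do
      let o₁ ← psiStarRev B l s (B.δR r σ)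
      let o₂ ← B.ψ (dstar B.δL l s.reverse) σ r
      return o₁ ++ o₂

/-- The generalized output function `ψ*` of a bimachine (a partial function,
modelled via `Option`). -/
def psiStar {QL QR : Type} (B : Bimachine QL QR) (l : QL) (t : List ℕ) (r : QR) :
    Option (List ℕ) :=
  psiStarRev B l t.reverse r

/-- A bimachine `B` represents the partial function `f_n^{(k)}`: for every word `w`
over `Σ_k`, the generalized output `ψ*(s_L, w, s_R)` is defined exactly when `w` is
in the domain of `f_n^{(k)}`, and it agrees with `f_n^{(k)}` wherever defined. -/
def Represents {QL QR : Type} (B : Bimachine QL QR) (k n : ℕ) : Prop :=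
  ∀ w : List ℕ, w ∈ Words (SigmaFull k) →
    ((psiStar B B.sL w B.sR).isSome ↔ fDom k n w) ∧
    (∀ ω : List ℕ, fGraph k n w ω → psiStar B B.sL w B.sR = some ω)


lemma psiStarRev_append {QL QR : Type} (B : Bimachine QL QR) (l : QL) (u v : List ℕ) (r : QR) :
    psiStarRev B l (u ++ v) r =
      (psiStarRev B l v (dstar B.δR r u)).bind (fun o₂ =>
        (psiStarRev B (dstar B.δL l v.reverse) u r).map (fun o₁ => o₂ ++ o₁)) := by
  induction u generalizing r with
  | nil =>
      simp only [List.nil_append, psiStarRev, dstar, List.foldl_nil]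
      cases psiStarRev B l v r <;> simp
  | cons σ u' ih =>
      simp only [List.cons_append, psiStarRev, List.append_eq]
      rw [ih]
      have hrev : (u' ++ v).reverse = v.reverse ++ u'.reverse := List.reverse_append
      have hd : dstar B.δL l (v.reverse ++ u'.reverse)
          = dstar B.δL (dstar B.δL l v.reverse) u'.reverse := List.foldl_append ..
      have hd2 : dstar B.δR r (σ :: u') = dstar B.δR (B.δR r σ) u' := rfl
      rw [hrev, hd, hd2]
      cases h1 : psiStarRev B l v (dstar B.δR (B.δR r σ) u') with
      | none => simp [h1]
      | some x =>
        cases h2 : psiStarRev B (dstar B.δL l v.reverse) u' (B.δR r σ) with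
        | none => simp [h1, h2]
        | some y =>
          cases h3 : B.ψ (dstar B.δL (dstar B.δL l v.reverse) u'.reverse) σ r with
          | none => simp [h1, h2, h3]
          | some z => simp [h1, h2, h3]

lemma psiStar_append {QL QR : Type} (B : Bimachine QL QR) (l : QL) (u v : List ℕ) (r : QR) :
    psiStar B l (u ++ v) r =
      (psiStar B l u (dstar B.δR r v.reverse)).bind (fun o₁ =>
        (psiStar B (dstar B.δL l u) v r).map (fun o₂ => o₁ ++ o₂)) := by
  unfold psiStar
  rw [List.reverse_append, psiStarRev_append]
  simp

/-- If a bimachine represents `f_n^{(k)}` and the words `α₁, α₂` over `Σ'_k`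
(of length `≥ n`, with distinct `n`-th characters from the end) lead the left
automaton to the same state `p_L`, then on any word `γ` over `Σ''_k` of length
`≥ n` every individual output `ψ` produced along `γ` is the empty word. -/
theorem psi_empty_on_right_block (k n : ℕ) (hk : 2 ≤ k) (hn : 1 ≤ n)
    (QL QR : Type) (B : Bimachine QL QR) (hB : Represents B k n)
    (α₁ α₂ : List ℕ)
    (hα₁ : α₁ ∈ Words (SigmaLo k)) (hα₂ : α₂ ∈ Words (SigmaLo k))
    (hl₁ : n ≤ α₁.length) (hl₂ : n ≤ α₂.length)
    (a b : ℕ) (ha : α₁[α₁.length - n]? = some a) (hb : α₂[α₂.length - n]? = some b)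
    (haS : a ∈ SigmaLo k) (hbS : b ∈ SigmaLo k) (hab : a ≠ b)
    (pL : QL) (hp₁ : dstar B.δL B.sL α₁ = pL) (hp₂ : dstar B.δL B.sL α₂ = pL)
    (γ : List ℕ) (hγ : γ ∈ Words (SigmaHi k)) (hγn : n ≤ γ.length)
    (l : ℕ) (hl : l < γ.length) (c : ℕ) (hc : γ[l]? = some c) :
    B.ψ (dstar B.δL pL (γ.take l)) c
        (dstar B.δR B.sR ((γ.drop (l + 1)).reverse)) = some [] := by
  obtain ⟨hln, hcv⟩ := List.getElem?_eq_some_iff.mp hc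
  have hn1 : n - 1 < γ.length := by omega
  set j := γ[n-1]'hn1 with hj
  have hjmem : j ∈ SigmaHi k := hγ j (List.getElem_mem _)
  have key : ∀ (α : List ℕ) (i : ℕ), α ∈ Words (SigmaLo k) → n ≤ α.length →
      α[α.length - n]? = some i → i ∈ SigmaLo k →
      fGraph k n (α ++ γ) [j, i] ∧ (α ++ γ) ∈ Words (SigmaFull k) := by
    intro α i hα hlen hi hiS
    obtain ⟨hilt, hival⟩ := List.getElem?_eq_some_iff.mp hi
    have hαdec : α = α.take (α.length - n) ++ [i] ++ α.drop (α.length - n + 1) := by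
      have h := List.drop_eq_getElem_cons hilt
      rw [hival] at h
      conv_lhs => rw [← List.take_append_drop (α.length - n) α, h]
      simp
    have hγdec : γ = γ.take (n-1) ++ [j] ++ γ.drop n := by
      have h := List.drop_eq_getElem_cons hn1
      have hnn : n - 1 + 1 = n := by omega
      rw [hnn] at h
      conv_lhs => rw [← List.take_append_drop (n-1) γ, h]
      simp only [hj, List.append_assoc, List.singleton_append]
    refine ⟨⟨i, j, hiS.1, hiS.2, hjmem.1, hjmem.2,
      ⟨α.take (α.length - n), α.drop (α.length - n + 1), γ.take (n-1), γ.drop n,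
       fun x hx => hα x (List.take_subset _ _ hx),
       fun x hx => hα x (List.drop_subset _ _ hx),
       by rw [List.length_drop]; omega,
       fun x hx => hγ x (List.take_subset _ _ hx),
       by rw [List.length_take]; omega,
       fun x hx => hγ x (List.drop_subset _ _ hx),
       ?_⟩, rfl⟩, ?_⟩
    · conv_lhs => rw [hαdec, hγdec]
      simp [List.append_assoc]
    · intro x hx
      rcases List.mem_append.mp hx with h | h
      · obtain ⟨h1, h2⟩ := hα x h; exact ⟨h1, by omega⟩
      · obtain ⟨h1, h2⟩ := hγ x h; exact ⟨by omega, h2⟩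
  obtain ⟨hg1, hw1⟩ := key α₁ a hα₁ hl₁ ha haS
  obtain ⟨hg2, hw2⟩ := key α₂ b hα₂ hl₂ hb hbS
  have e1 := (hB _ hw1).2 _ hg1
  have e2 := (hB _ hw2).2 _ hg2
  rw [psiStar_append, hp₁] at e1
  rw [psiStar_append, hp₂] at e2
  obtain ⟨x₁, y, hy, hxy1⟩ : ∃ x₁ y,
      psiStar B pL γ B.sR = some y ∧ x₁ ++ y = [j, a] := by
    cases h1 : psiStar B B.sL α₁ (dstar B.δR B.sR γ.reverse) with
    | none => rw [h1] at e1; simp at e1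
    | some x =>
      cases h2 : psiStar B pL γ B.sR with
      | none => rw [h1, h2] at e1; simp at e1
      | some y =>
        rw [h1, h2] at e1; simp only [Option.bind_some, Option.map_some,
          Option.some.injEq] at e1
        exact ⟨x, y, rfl, e1⟩
  obtain ⟨x₂, hxy2⟩ : ∃ x₂, x₂ ++ y = [j, b] := by
    rw [hy] at e2
    cases h1 : psiStar B B.sL α₂ (dstar B.δR B.sR γ.reverse) with
    | none => rw [h1] at e2; simp at e2
    | some x =>
      rw [h1] at e2; simp only [Option.bind_some, Option.map_some,
        Option.some.injEq] at e2
      exact ⟨x, e2⟩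
  have hynil : y = [] := by
    by_contra hne
    have g1 : (x₁ ++ y).getLast? = some a := by rw [hxy1]; rfl
    have g2 : (x₂ ++ y).getLast? = some b := by rw [hxy2]; rfl
    rw [List.getLast?_append_of_ne_nil _ hne] at g1 g2
    rw [g1] at g2
    exact hab (Option.some.inj g2)
  rw [hynil] at hy
  have hsplit : γ.take l ++ (c :: γ.drop (l+1)) = γ := by
    have h := List.drop_eq_getElem_cons hln
    rw [hcv] at h
    rw [← h, List.take_append_drop]
  rw [← hsplit, psiStar_append] at hy
  have hmid : psiStar B (dstar B.δL pL (γ.take l)) (c :: γ.drop (l+1)) B.sR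
      = some [] := by
    cases h1 : psiStar B pL (γ.take l)
        (dstar B.δR B.sR (c :: γ.drop (l+1)).reverse) with
    | none => rw [h1] at hy; simp at hy
    | some x =>
      cases h2 : psiStar B (dstar B.δL pL (γ.take l)) (c :: γ.drop (l+1)) B.sR with
      | none => rw [h1, h2] at hy; simp at hy
      | some z =>
        rw [h1, h2] at hy
        simp only [Option.bind_some, Option.map_some, Option.some.injEq] at hy
        rw [(List.append_eq_nil_iff.mp hy).2]
  rw [show (c :: γ.drop (l+1)) = [c] ++ γ.drop (l+1) from rfl,
    psiStar_append] at hmid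
  have hfin : psiStar B (dstar B.δL pL (γ.take l)) [c]
      (dstar B.δR B.sR (γ.drop (l+1)).reverse) = some [] := by
    cases h1 : psiStar B (dstar B.δL pL (γ.take l)) [c]
        (dstar B.δR B.sR (γ.drop (l+1)).reverse) with
    | none => rw [h1] at hmid; simp at hmid
    | some x =>
      cases h2 : psiStar B (dstar B.δL (dstar B.δL pL (γ.take l)) [c])
          (γ.drop (l+1)) B.sR with
      | none => rw [h1, h2] at hmid; simp at hmid
      | some z =>
        rw [h1, h2] at hmid
        simp only [Option.bind_some, Option.map_some, Option.some.injEq] at hmid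
        rw [(List.append_eq_nil_iff.mp hmid).1]
  simp only [psiStar, psiStarRev, dstar, List.reverse_cons, List.reverse_nil,
    List.nil_append, List.foldl_nil] at hfin
  show B.ψ (List.foldl B.δL pL (γ.take l)) c
      (List.foldl B.δR B.sR (γ.drop (l+1)).reverse) = some []
  cases hψ : B.ψ (List.foldl B.δL pL (γ.take l)) c
      (List.foldl B.δR B.sR (γ.drop (l+1)).reverse) with
  | none => rw [hψ] at hfin; simp at hfin
  | some w =>
    rw [hψ] at hfin
    simp at hfin
    rw [hfin]
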